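/- arXiv:1009.2137 — 3 statements merged into one kernel-verified Lean document; each statement's English description precedes it below -/
import Mathlib

section
/- With μ̄ > r > 0, 0 < T̄ < T, and μ̄ > rT/T̄, the value y₀ = y_{0max} = ((μ̄−r)/r)·(e^{(r/μ̄)(μ̄T̄−rT)} − 1)/(e^{(rT/μ̄)(μ̄−r)} − 1) satisfies the periodicity equation [r·ln(e^{r(T−T̄)}) − μ̄·ln((μ̄−r(1+y₀e^{r(T−T̄)}))/(μ̄−r(1+y₀)))]/(r(μ̄−r)) = T̄, i.e., the solution with u ≡ 0 is T-periodic. -/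
/-!
Write `A = exp ((r/μ)(μT̄ - rT))`, `E = exp (r(T - T̄))` and `B = exp ((rT/μ)(μ - r))`, so that
`E A = B` and `y₀ = ((μ - r)/r) (A - 1)/(B - 1)`. Then `μ - r(1 + y₀) = (μ - r) A (E - 1)/(B - 1)`
and `μ - r(1 + y₀ E) = (μ - r)(E - 1)/(B - 1)`, so the quotient inside the logarithm is `A⁻¹`,
and the periodicity equation reduces to a linear identity in the exponents.
-/

theorem periodicity_quotient_eq_inv {K : Type*} [Field K] {μ r A B E : K} (hr : r ≠ 0)
    (hμr : μ - r ≠ 0) (hA : A ≠ 0) (hE : E ≠ 1) (hB : B ≠ 1) (hEA : E * A = B) :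
    (μ - r * (1 + (μ - r) / r * (A - 1) / (B - 1) * E))
        / (μ - r * (1 + (μ - r) / r * (A - 1) / (B - 1))) = A⁻¹ := by
  have hE' : E - 1 ≠ 0 := sub_ne_zero.mpr hE
  have hB' : B - 1 ≠ 0 := sub_ne_zero.mpr hB
  have hnum : μ - r * (1 + (μ - r) / r * (A - 1) / (B - 1) * E)
      = (μ - r) * (E - 1) / (B - 1) := by
    field_simp
    linear_combination (r - μ) * hEA
  have hden : μ - r * (1 + (μ - r) / r * (A - 1) / (B - 1))
      = (μ - r) * A * (E - 1) / (B - 1) := by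
    field_simp
    linear_combination (r - μ) * hEA
  rw [hnum, hden]
  field_simp

theorem y0max_satisfies_periodicity_general
    (μ r Tbar T : ℝ) (hr : 0 < r) (hμ : r < μ) (hTbar : 0 < Tbar) (hT : Tbar < T)
    (y₀ : ℝ)
    (hy₀ : y₀ = ((μ - r) / r) *
        (Real.exp ((r / μ) * (μ * Tbar - r * T)) - 1) /
        (Real.exp ((r * T / μ) * (μ - r)) - 1)) :
    (r * Real.log (Real.exp (r * (T - Tbar)))
        - μ * Real.log ((μ - r * (1 + y₀ * Real.exp (r * (T - Tbar))))
            / (μ - r * (1 + y₀))))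
      / (r * (μ - r)) = Tbar := by
  have hμ0 : μ ≠ 0 := (hr.trans hμ).ne'
  have hμr : μ - r ≠ 0 := (sub_pos.mpr hμ).ne'
  have hEA : Real.exp (r * (T - Tbar)) * Real.exp (r / μ * (μ * Tbar - r * T))
      = Real.exp (r * T / μ * (μ - r)) := by
    rw [← Real.exp_add]
    congr 1
    field_simp
    ring
  have hE : Real.exp (r * (T - Tbar)) ≠ 1 := by
    rw [Ne, Real.exp_eq_one_iff]
    exact (mul_pos hr (sub_pos.mpr hT)).ne'
  have hB : Real.exp (r * T / μ * (μ - r)) ≠ 1 := by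
    rw [Ne, Real.exp_eq_one_iff]
    exact (mul_pos (div_pos (mul_pos hr (hTbar.trans hT)) (hr.trans hμ)) (sub_pos.mpr hμ)).ne'
  rw [hy₀, periodicity_quotient_eq_inv hr.ne' hμr (Real.exp_pos _).ne' hE hB hEA,
    Real.log_inv, Real.log_exp, Real.log_exp]
  field_simp
  ring

/-- The value y₀ = y_{0max} satisfies the periodicity equation: the solution
with u ≡ 0 is T-periodic. -/
theorem y0max_satisfies_periodicity
    (μ r Tbar T : ℝ) (hr : 0 < r) (hμ : r < μ) (hTbar : 0 < Tbar) (hT : Tbar < T)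
    (hμT : r * T / Tbar < μ)
    (y₀ : ℝ)
    (hy₀ : y₀ = ((μ - r) / r) *
        (Real.exp ((r / μ) * (μ * Tbar - r * T)) - 1) /
        (Real.exp ((r * T / μ) * (μ - r)) - 1)) :
    (r * Real.log (Real.exp (r * (T - Tbar)))
        - μ * Real.log ((μ - r * (1 + y₀ * Real.exp (r * (T - Tbar))))
            / (μ - r * (1 + y₀))))
      / (r * (μ - r)) = Tbar :=
  y0max_satisfies_periodicity_general μ r Tbar T hr hμ hTbar hT y₀ hy₀
end

section
/- If μ̄ > rT/T̄ with r > 0 and 0 < T̄ < T, then y_{0min} < y_{0max} whenever both are positive, i.e., ((μ̄−r−1)/(r+1))·(e^{((r+1)/μ̄)(μ̄T̄−(r+1)T)} − 1)/(e^{((r+1)T/μ̄)(μ̄−r−1)} − 1) < ((μ̄−r)/r)·(e^{(r/μ̄)(μ̄T̄−rT)} − 1)/(e^{(rT/μ̄)(μ̄−r)} − 1), assuming additionally μ̄ > (r+1)T/T̄. -/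
/-!
Write the periodic initial condition as a function `F` of the total loss rate `s = r + u`, so
that `y_{0max} = F r` and `y_{0min} = F (r + 1)`, and show that `log F` is strictly decreasing on
`0 < s < μ T̄ / T`. With `u = s (T̄ - s T / μ)` and `v = s T (μ - s) / μ` the two exponents,
`(log F)' = -T̄ / u + u' ψ(u) - v' ψ(v)`, where `ψ` is the derivative of `log ((eˣ - 1) / x)`.
For `x > 0`, `ψ x` lies in `(0, 1)` and above `1 - 1 / x`, so `|ψ u - ψ v| < 1 / u` as
`0 < u ≤ v`. Since `0 < s T / μ < T̄`, the slope `u' = T̄ - 2 s T / μ` satisfies `|u'| < T̄`, and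
`v' = u' + (T - T̄)`; hence `u' (ψ u - ψ v) < T̄ / u` and `(T - T̄) ψ v > 0` make `(log F)'`
negative.
-/

open Real Set

lemma exp_sub_one_pos {x : ℝ} (hx : 0 < x) : 0 < exp x - 1 :=
  sub_pos.mpr (one_lt_exp_iff.mpr hx)

/-- The derivative of `x ↦ log ((exp x - 1) / x)`. -/
noncomputable def psi (x : ℝ) : ℝ := exp x / (exp x - 1) - x⁻¹

lemma psi_pos {x : ℝ} (hx : 0 < x) : 0 < psi x := by
  have hE := exp_sub_one_pos hx
  have h := one_sub_lt_exp_neg hx.ne'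
  rw [psi, sub_pos, inv_lt_iff_one_lt_mul₀' hx, mul_div_assoc', lt_div_iff₀ hE, one_mul]
  have := mul_lt_mul_of_pos_right h (exp_pos x)
  rw [← exp_add, neg_add_cancel, exp_zero] at this
  linarith

lemma psi_lt_one {x : ℝ} (hx : 0 < x) : psi x < 1 := by
  have hE := exp_sub_one_pos hx
  have h := add_one_lt_exp hx.ne'
  have h' : 1 < x⁻¹ * (exp x - 1) := by rw [lt_inv_mul_iff₀ hx]; linarith
  rw [psi, sub_lt_iff_lt_add, div_lt_iff₀ hE, add_mul, one_mul]
  linarith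

lemma one_sub_inv_lt_psi {x : ℝ} (hx : 0 < x) : 1 - x⁻¹ < psi x := by
  have hE := exp_sub_one_pos hx
  rw [psi, sub_lt_sub_iff_right, lt_div_iff₀ hE]
  linarith

lemma abs_psi_sub_psi_lt {u v : ℝ} (hu : 0 < u) (huv : u ≤ v) : |psi u - psi v| < u⁻¹ := by
  have hvu : v⁻¹ ≤ u⁻¹ := inv_anti₀ hu huv
  rw [abs_sub_lt_iff]
  constructor <;> linarith [one_sub_inv_lt_psi hu, one_sub_inv_lt_psi (hu.trans_le huv),
    psi_lt_one hu, psi_lt_one (hu.trans_le huv)]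

lemma mul_psi_sub_mul_psi_lt {u v a b d : ℝ} (hu : 0 < u) (huv : u ≤ v) (ha : |a| < b)
    (hd : 0 < d) : a * psi u - (a + d) * psi v < b / u := by
  have hpsi : a * (psi u - psi v) < b / u := calc
    a * (psi u - psi v) ≤ |a| * |psi u - psi v| := by rw [← abs_mul]; exact le_abs_self _
    _ ≤ |a| * u⁻¹ := by gcongr; exact (abs_psi_sub_psi_lt hu huv).le
    _ < b / u := by rw [div_eq_mul_inv]; gcongr
  nlinarith [psi_pos (hu.trans_le huv)]

lemma exp_mul_div_exp_sub_one (x a : ℝ) : exp x * a / (exp x - 1) = a * psi x + a / x := by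
  rw [psi]; ring

noncomputable def periodicInitialValue (μ Tbar T s : ℝ) : ℝ :=
  (μ - s) / s * (exp (s / μ * (μ * Tbar - s * T)) - 1) / (exp (s * T / μ * (μ - s)) - 1)

noncomputable def logPeriodicInitialValue (μ Tbar T s : ℝ) : ℝ :=
  log (μ - s) - log s + log (exp (s / μ * (μ * Tbar - s * T)) - 1)
    - log (exp (s * T / μ * (μ - s)) - 1)

section

variable {μ Tbar T s : ℝ}

lemma lt_and_exponent_pos_and_exponent_le (hTbar : 0 < Tbar) (hT : Tbar < T) (hs : 0 < s)
    (hsT : s * T < μ * Tbar) :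
    s < μ ∧ 0 < s / μ * (μ * Tbar - s * T) ∧
      s / μ * (μ * Tbar - s * T) ≤ s * T / μ * (μ - s) := by
  have hT0 : 0 < T := hTbar.trans hT
  have hμ : 0 < μ := pos_of_mul_pos_left ((mul_pos hs hT0).trans hsT) hTbar.le
  have hsμ : s < μ := lt_of_mul_lt_mul_right (hsT.trans (by gcongr)) hT0.le
  have hgap : s * T / μ * (μ - s) - s / μ * (μ * Tbar - s * T) = s * (T - Tbar) := by
    field_simp; ring
  refine ⟨hsμ, by have := sub_pos.2 hsT; positivity, sub_nonneg.1 ?_⟩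
  rw [hgap]
  exact mul_nonneg hs.le (sub_nonneg.2 hT.le)

lemma periodicInitialValue_eq_exp (hTbar : 0 < Tbar) (hT : Tbar < T) (hs : 0 < s)
    (hsT : s * T < μ * Tbar) :
    periodicInitialValue μ Tbar T s = exp (logPeriodicInitialValue μ Tbar T s) := by
  obtain ⟨hsμ, hu, huv⟩ := lt_and_exponent_pos_and_exponent_le hTbar hT hs hsT
  rw [logPeriodicInitialValue, exp_sub, exp_add, exp_sub, exp_log (sub_pos.2 hsμ), exp_log hs,
    exp_log (exp_sub_one_pos hu), exp_log (exp_sub_one_pos (hu.trans_le huv)),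
    periodicInitialValue]

lemma hasDerivAt_logPeriodicInitialValue (hTbar : 0 < Tbar) (hT : Tbar < T) (hs : 0 < s)
    (hsT : s * T < μ * Tbar) :
    HasDerivAt (logPeriodicInitialValue μ Tbar T)
      (-Tbar / (s / μ * (μ * Tbar - s * T))
        + (Tbar - 2 * s * T / μ) * psi (s / μ * (μ * Tbar - s * T))
        - (T - 2 * s * T / μ) * psi (s * T / μ * (μ - s))) s := by
  obtain ⟨hsμ, hu, huv⟩ := lt_and_exponent_pos_and_exponent_le hTbar hT hs hsT
  have hμ : 0 < μ := hs.trans hsμ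
  have hv := hu.trans_le huv
  have hu' : HasDerivAt (fun x ↦ x / μ * (μ * Tbar - x * T)) (Tbar - 2 * s * T / μ) s := by
    refine (((hasDerivAt_id s).div_const μ).mul
      (((hasDerivAt_id s).mul_const T).const_sub (μ * Tbar))).congr_deriv ?_
    simp only [id]; field_simp; ring
  have hv' : HasDerivAt (fun x ↦ x * T / μ * (μ - x)) (T - 2 * s * T / μ) s := by
    refine ((((hasDerivAt_id s).mul_const T).div_const μ).mul
      ((hasDerivAt_id s).const_sub μ)).congr_deriv ?_
    simp only [id]; field_simp; ring
  have := ((((hasDerivAt_id s).const_sub μ).log (sub_pos.2 hsμ).ne').sub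
    (hasDerivAt_log hs.ne')).add (((hu'.exp).sub_const 1).log (exp_sub_one_pos hu).ne')
    |>.sub (((hv'.exp).sub_const 1).log (exp_sub_one_pos hv).ne')
  refine this.congr_deriv ?_
  have hrational : -Tbar / (s / μ * (μ * Tbar - s * T)) = -1 / (μ - s) - s⁻¹
      + (Tbar - 2 * s * T / μ) / (s / μ * (μ * Tbar - s * T))
      - (T - 2 * s * T / μ) / (s * T / μ * (μ - s)) := by
    have : Tbar * μ - s * T ≠ 0 := by linarith
    have : μ - s ≠ 0 := by linarith
    have : T ≠ 0 := by linarith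
    field_simp
    ring
  simp only [id, exp_mul_div_exp_sub_one]
  linarith

lemma deriv_logPeriodicInitialValue_neg (hTbar : 0 < Tbar) (hT : Tbar < T) (hs : 0 < s)
    (hsT : s * T < μ * Tbar) : deriv (logPeriodicInitialValue μ Tbar T) s < 0 := by
  obtain ⟨hsμ, hu, huv⟩ := lt_and_exponent_pos_and_exponent_le hTbar hT hs hsT
  have hμ : 0 < μ := hs.trans hsμ
  have hw : 0 < s * T / μ := by have := hTbar.trans hT; positivity
  have hwT : s * T / μ < Tbar := by rwa [div_lt_iff₀ hμ, mul_comm Tbar]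
  have hslope : |Tbar - 2 * s * T / μ| < Tbar := by
    rw [mul_assoc, mul_div_assoc, abs_lt]
    constructor <;> linarith
  have := mul_psi_sub_mul_psi_lt hu huv hslope (sub_pos.2 hT)
  rw [(hasDerivAt_logPeriodicInitialValue hTbar hT hs hsT).deriv, neg_div,
    show T - 2 * s * T / μ = Tbar - 2 * s * T / μ + (T - Tbar) by ring]
  linarith

lemma strictAntiOn_periodicInitialValue (hTbar : 0 < Tbar) (hT : Tbar < T) :
    StrictAntiOn (periodicInitialValue μ Tbar T) (Ioo 0 (μ * Tbar / T)) := by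
  have hdomain : ∀ s ∈ Ioo 0 (μ * Tbar / T), 0 < s ∧ s * T < μ * Tbar :=
    fun s hs ↦ ⟨hs.1, (lt_div_iff₀ (hTbar.trans hT)).1 hs.2⟩
  have hlog : StrictAntiOn (logPeriodicInitialValue μ Tbar T) (Ioo 0 (μ * Tbar / T)) := by
    refine strictAntiOn_of_deriv_neg (convex_Ioo _ _) (fun s hs ↦ ?_) (fun s hs ↦ ?_)
    · obtain ⟨hs, hsT⟩ := hdomain s hs
      exact (hasDerivAt_logPeriodicInitialValue hTbar hT hs hsT).continuousAt.continuousWithinAt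
    · rw [interior_Ioo] at hs
      obtain ⟨hs, hsT⟩ := hdomain s hs
      exact deriv_logPeriodicInitialValue_neg hTbar hT hs hsT
  intro a ha b hb hab
  obtain ⟨ha0, haT⟩ := hdomain a ha
  obtain ⟨hb0, hbT⟩ := hdomain b hb
  rw [periodicInitialValue_eq_exp hTbar hT ha0 haT, periodicInitialValue_eq_exp hTbar hT hb0 hbT]
  exact exp_lt_exp.2 (hlog ha hb hab)

end

theorem y0min_lt_y0max_general
    (μ r Tbar T : ℝ) (hr : 0 < r) (hTbar : 0 < Tbar) (hT : Tbar < T)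
    (hμ1 : (r + 1) * T / Tbar < μ) :
    ((μ - r - 1) / (r + 1)) *
        (Real.exp (((r + 1) / μ) * (μ * Tbar - (r + 1) * T)) - 1) /
        (Real.exp (((r + 1) * T / μ) * (μ - r - 1)) - 1)
      < ((μ - r) / r) *
        (Real.exp ((r / μ) * (μ * Tbar - r * T)) - 1) /
        (Real.exp ((r * T / μ) * (μ - r)) - 1) := by
  have hr1 : r + 1 < μ * Tbar / T := by
    rw [lt_div_iff₀ (hTbar.trans hT)]
    exact (div_lt_iff₀ hTbar).1 hμ1
  have := strictAntiOn_periodicInitialValue hTbar hT ⟨hr, (lt_add_one r).trans hr1⟩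
    ⟨by linarith, hr1⟩ (lt_add_one r)
  simpa only [periodicInitialValue, sub_add_eq_sub_sub] using this

/-- y_{0min} < y_{0max} when both are positive. -/
theorem y0min_lt_y0max
    (μ r Tbar T : ℝ) (hr : 0 < r) (hTbar : 0 < Tbar) (hT : Tbar < T)
    (hμ0 : r * T / Tbar < μ) (hμ1 : (r + 1) * T / Tbar < μ) :
    ((μ - r - 1) / (r + 1)) *
        (Real.exp (((r + 1) / μ) * (μ * Tbar - (r + 1) * T)) - 1) /
        (Real.exp (((r + 1) * T / μ) * (μ - r - 1)) - 1)
      < ((μ - r) / r) *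
        (Real.exp ((r / μ) * (μ * Tbar - r * T)) - 1) /
        (Real.exp ((r * T / μ) * (μ - r)) - 1) :=
  y0min_lt_y0max_general μ r Tbar T hr hTbar hT hμ1
end

section
/- A singular arc (λ ≡ 1 on a time interval) is impossible during the dark phase: if μ(t) = 0 and λ(t) = 1 on an interval, then d/dt(1 − λ) = −r ≠ 0, a contradiction. During the light phase μ(t) = μ̄, λ ≡ 1 forces y ≡ y_σ = √(μ̄/r) − 1 and the singular control u_σ = √(μ̄r) − r. -/
lemma lam_deriv_zero (a b : ℝ) (lam : ℝ → ℝ)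
    (hsing : ∀ t ∈ Set.Ioo a b, lam t = 1) {s : ℝ} (hs : s ∈ Set.Ioo a b) :
    HasDerivAt lam 0 s := by
  have h1 : lam =ᶠ[nhds s] fun _ => (1 : ℝ) :=
    Filter.eventuallyEq_iff_exists_mem.2
      ⟨Set.Ioo a b, isOpen_Ioo.mem_nhds hs, fun x hx => hsing x hx⟩
  exact (hasDerivAt_const s (1 : ℝ)).congr_of_eventuallyEq h1

/-- No singular arc in the dark phase; in the light phase a singular arc forces
y ≡ y_σ = √(μ̄/r) − 1 and u ≡ u_σ = √(μ̄r) − r. -/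
theorem singular_arc_characterization
    (μbar r a b : ℝ) (hr : 0 < r) (hμ : r < μbar) (hab : a < b)
    (y lam u μ : ℝ → ℝ)
    (hypos : ∀ t ∈ Set.Ioo a b, 0 < y t)
    (hy : ∀ t ∈ Set.Ioo a b,
        HasDerivAt y (μ t * y t / (1 + y t) - r * y t - u t * y t) t)
    (hlam : ∀ t ∈ Set.Ioo a b,
        HasDerivAt lam
          (lam t * (-(μ t / (1 + y t) ^ 2) + r + u t) - u t) t) :
    ((∀ t ∈ Set.Ioo a b, μ t = 0) → ¬ (∀ t ∈ Set.Ioo a b, lam t = 1)) ∧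
      ((∀ t ∈ Set.Ioo a b, μ t = μbar) → (∀ t ∈ Set.Ioo a b, lam t = 1) →
        ∀ t ∈ Set.Ioo a b,
          y t = Real.sqrt (μbar / r) - 1 ∧ u t = Real.sqrt (μbar * r) - r) := by
  constructor
  · intro hdark hsing
    have ht : (a + b) / 2 ∈ Set.Ioo a b := ⟨by linarith, by linarith⟩
    have h2 := (hlam _ ht).unique (lam_deriv_zero a b lam hsing ht)
    rw [hsing _ ht, hdark _ ht] at h2
    simp at h2
    linarith
  · intro hlight hsing
    have key : ∀ s ∈ Set.Ioo a b, μbar / (1 + y s) ^ 2 = r := by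
      intro s hs
      have h2 := (hlam s hs).unique (lam_deriv_zero a b lam hsing hs)
      rw [hsing s hs, hlight s hs] at h2
      linarith
    have hys : ∀ s ∈ Set.Ioo a b, y s = Real.sqrt (μbar / r) - 1 := by
      intro s hs
      have h1 := key s hs
      have hpos : 0 < 1 + y s := by linarith [hypos s hs]
      have hsq : (1 + y s) ^ 2 = μbar / r := by
        rw [eq_div_iff hr.ne']
        field_simp at h1
        linarith
      have h3 : Real.sqrt ((1 + y s) ^ 2) = Real.sqrt (μbar / r) := by rw [hsq]
      rw [Real.sqrt_sq hpos.le] at h3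
      linarith
    intro t ht
    refine ⟨hys t ht, ?_⟩
    -- y is locally constant, so its derivative is 0
    have hyd : HasDerivAt y 0 t := by
      have h1 : y =ᶠ[nhds t] fun _ => Real.sqrt (μbar / r) - 1 :=
        Filter.eventuallyEq_iff_exists_mem.2
          ⟨Set.Ioo a b, isOpen_Ioo.mem_nhds ht, fun x hx => hys x hx⟩
      exact (hasDerivAt_const t _).congr_of_eventuallyEq h1
    have h2 := (hy t ht).unique hyd
    rw [hlight t ht] at h2
    have hyt := hypos t ht
    have hpos : 0 < 1 + y t := by linarith
    have hu : u t = μbar / (1 + y t) - r := by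
      field_simp at h2 ⊢
      nlinarith [h2]
    have hy1 : 1 + y t = Real.sqrt (μbar / r) := by
      have := hys t ht; linarith
    have hsp : 0 < Real.sqrt (μbar / r) := by rw [← hy1]; exact hpos
    have hmul : Real.sqrt (μbar / r) * Real.sqrt (μbar * r) = μbar := by
      rw [← Real.sqrt_mul (div_pos (by linarith) hr).le]
      have : μbar / r * (μbar * r) = μbar ^ 2 := by field_simp
      rw [this, Real.sqrt_sq (by linarith)]
    have : μbar / (1 + y t) = Real.sqrt (μbar * r) := by
      rw [hy1, eq_comm, eq_div_iff hsp.ne', mul_comm]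
      exact hmul
    rw [hu, this]
end
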